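/- arXiv:2211.01439 — 2 statements merged into one kernel-verified Lean document; each statement's English description precedes it below -/
import Mathlib

section
/- Let A be a countable subset of ℝ^d. Then there exists a lattice D in ℝ^d (i.e., a discrete cocompact subgroup, of the form c₁ℤe₁ ⊕ ⋯ ⊕ c_dℤe_d for nonzero reals cᵢ) such that D ∩ spanℚ(A) = {0} and D° ∩ spanℚ(A) = {0}, where D° = {x ∈ ℝ^d : ⟨v, x⟩ ∈ ℤ for all v ∈ D} is the dual lattice. -/
/-!
The ℚ-span `V` of `A` is countable, hence so is the set `S` of coordinates of its vectors. Pick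
`c ≠ 0` outside the countable set of all quotients `s / n` and `n / s` (`s ∈ S`, `n ∈ ℤ`) and take
`D = c ℤ^d`. A vector of `D ∩ V` has coordinates `n c ∈ S`, and pairing a vector `x ∈ D° ∩ V`
with `c eᵢ ∈ D` gives `c xᵢ ∈ ℤ`; by the choice of `c` both force every coordinate to vanish.
-/

theorem Submodule.countable_span_of_countable {R M : Type*} [Semiring R] [Countable R]
    [AddCommMonoid M] [Module R M] {s : Set M} (hs : s.Countable) :
    (Submodule.span R s : Set M).Countable := by
  have := hs.to_subtype
  have hspan : Countable (Submodule.span R (Set.range ((↑) : s → M))) := inferInstance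
  rw [Subtype.range_coe] at hspan
  exact Set.countable_coe_iff.mp hspan

theorem Set.Countable.exists_ne_zero_forall_ne_intCast_mul {S : Set ℝ} (hS : S.Countable) :
    ∃ c : ℝ, c ≠ 0 ∧ ∀ s ∈ S, s ≠ 0 → ∀ n : ℤ, s ≠ n * c ∧ c * s ≠ n := by
  set B : Set ℝ := insert 0 (⋃ s ∈ S, ⋃ n : ℤ, {s / n, n / s})
  have hB : B.Countable :=
    (hS.biUnion fun _ _ => Set.countable_iUnion fun _ => (Set.toFinite _).countable).insert 0
  obtain ⟨c, hcB⟩ := (hB.dense_compl ℝ).nonempty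
  have hc0 : c ≠ 0 := fun h => hcB (Or.inl h)
  have hquot : ∀ s ∈ S, ∀ n : ℤ, c ≠ s / n ∧ c ≠ n / s := fun s hs n =>
    ⟨fun h => hcB (Or.inr (Set.mem_biUnion hs (Set.mem_iUnion.2 ⟨n, Or.inl h⟩))),
      fun h => hcB (Or.inr (Set.mem_biUnion hs (Set.mem_iUnion.2 ⟨n, Or.inr h⟩)))⟩
  refine ⟨c, hc0, fun s hs hs0 n => ⟨fun h => ?_, fun h => ?_⟩⟩
  · have hn : (n : ℝ) ≠ 0 := fun hn => hs0 (by rw [h, hn, zero_mul])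
    exact (hquot s hs n).1 (by rw [h]; field_simp)
  · exact (hquot s hs n).2 (by rw [← h]; field_simp)

section Lattice

variable {ι : Type*} {V : Set (ι → ℝ)} {c : ℝ}

theorem intLattice_inter_eq_singleton_zero (h0 : (0 : ι → ℝ) ∈ V)
    (hc : ∀ x ∈ V, ∀ i, ∀ n : ℤ, x i = n * c → x i = 0) :
    {x : ι → ℝ | ∀ i, ∃ n : ℤ, x i = n * c} ∩ V = {0} := by
  refine Set.eq_singleton_iff_unique_mem.2 ⟨⟨fun _ => ⟨0, by simp⟩, h0⟩, ?_⟩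
  rintro x ⟨hxD, hxV⟩
  funext i
  obtain ⟨n, hn⟩ := hxD i
  exact hc x hxV i n hn

theorem dualIntLattice_inter_eq_singleton_zero [Fintype ι] [DecidableEq ι] (h0 : (0 : ι → ℝ) ∈ V)
    (hc : ∀ x ∈ V, ∀ i, ∀ n : ℤ, c * x i = n → x i = 0) :
    {x : ι → ℝ | ∀ v : ι → ℝ, (∀ i, ∃ n : ℤ, v i = n * c) →
        ∃ n : ℤ, (∑ i, v i * x i) = (n : ℝ)} ∩ V = {0} := by
  refine Set.eq_singleton_iff_unique_mem.2 ⟨⟨fun _ _ => ⟨0, by simp⟩, h0⟩, ?_⟩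
  rintro x ⟨hxD, hxV⟩
  funext i
  have hsingle : ∀ j, ∃ n : ℤ, (Pi.single i c : ι → ℝ) j = n * c := fun j => by
    rcases eq_or_ne j i with rfl | hj
    · exact ⟨1, by simp⟩
    · exact ⟨0, by simp [hj]⟩
  obtain ⟨n, hn⟩ := hxD (Pi.single i c) hsingle
  exact hc x hxV i n (by rwa [← dotProduct, single_dotProduct] at hn)

end Lattice

theorem stmt_1 (d : ℕ) (A : Set (Fin d → ℝ)) (hA : A.Countable) :
    ∃ c : Fin d → ℝ, (∀ i, c i ≠ 0) ∧
      {x : Fin d → ℝ | ∀ i, ∃ n : ℤ, x i = n * c i} ∩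
        (Submodule.span ℚ A : Set (Fin d → ℝ)) = {0} ∧
      {x : Fin d → ℝ | ∀ v : Fin d → ℝ, (∀ i, ∃ n : ℤ, v i = n * c i) →
          ∃ n : ℤ, (∑ i, v i * x i) = (n : ℝ)} ∩
        (Submodule.span ℚ A : Set (Fin d → ℝ)) = {0} := by
  set V := (Submodule.span ℚ A : Set (Fin d → ℝ))
  set S : Set ℝ := ⋃ i, (· i) '' V
  have hS : S.Countable := Set.countable_iUnion fun _ =>
    (Submodule.countable_span_of_countable hA).image _
  have hcoord : ∀ x ∈ V, ∀ i, x i ∈ S := fun x hx i => Set.mem_iUnion.2 ⟨i, x, hx, rfl⟩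
  obtain ⟨c, hc0, hc⟩ := hS.exists_ne_zero_forall_ne_intCast_mul
  have h0 : (0 : Fin d → ℝ) ∈ V := (Submodule.span ℚ A).zero_mem
  refine ⟨fun _ => c, fun _ => hc0, intLattice_inter_eq_singleton_zero h0 ?_,
    dualIntLattice_inter_eq_singleton_zero h0 ?_⟩
  · exact fun x hx i n h => by_contra fun hxi => (hc _ (hcoord x hx i) hxi n).1 h
  · exact fun x hx i n h => by_contra fun hxi => (hc _ (hcoord x hx i) hxi n).2 h
end

section
/- Let H, H' be locally compact abelian groups, φ : H → H' a continuous group homomorphism with dense range, and let ν be the pushforward under φ of a Haar measure m_H on H, assumed to be a Radon measure on H'. Then ν is invariant under translation by every element of H', i.e., ν is H'-translation invariant (hence a Haar measure up to scaling, if nonzero and finite on compacts). -/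
/-!
The pushforward `ν = φ_* m_H` is invariant under translation by every element of the dense
subgroup `φ(H)`, because `m_H` is invariant and `φ` intertwines translations. To pass to an
arbitrary `y`, take a compact `K` and an open `U ⊇ y + K`; for `s ∈ φ(H)` close enough to `y`
still `s + K ⊆ U`, so `ν K = ν (s + K) ≤ ν U`. Outer regularity gives `ν K ≤ ν (y + K)`, the same
with `-y` gives equality, and a regular measure is determined by its values on compact sets.
-/

open MeasureTheory Set Topology

namespace MeasureTheory.Measure

theorem Regular.ext_of_isCompact {X : Type*} [TopologicalSpace X] [MeasurableSpace X]
    {μ ν : Measure X} [μ.Regular] [ν.Regular] (h : ∀ K, IsCompact K → μ K = ν K) : μ = ν := by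
  have hopen : ∀ U, IsOpen U → μ U = ν U := fun U hU => by
    rw [hU.measure_eq_iSup_isCompact, hU.measure_eq_iSup_isCompact]
    exact iSup_congr fun K => iSup_congr fun _ => iSup_congr fun hK => h K hK
  ext s _
  rw [Set.measure_eq_iInf_isOpen s μ, Set.measure_eq_iInf_isOpen s ν]
  exact iInf_congr fun U => iInf_congr fun _ => iInf_congr fun hU => hopen U hU

theorem map_add_left_map_eq_self {G G' : Type*} [AddGroup G] [MeasurableSpace G] [MeasurableAdd G]
    [AddGroup G'] [MeasurableSpace G'] [MeasurableAdd G']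
    (μ : Measure G) [μ.IsAddLeftInvariant] (φ : G →+ G') (hφ : Measurable φ) (g : G) :
    map (φ g + ·) (map φ μ) = map φ μ := by
  have hcomm : (φ g + ·) ∘ φ = φ ∘ (g + ·) := funext fun x => (map_add φ g x).symm
  rw [map_map (measurable_const_add _) hφ, hcomm, ← map_map hφ (measurable_const_add _),
    map_add_left_eq_self]

section DenseSubgroup

variable {G : Type*} [AddGroup G] [TopologicalSpace G] [IsTopologicalAddGroup G]
  [MeasurableSpace G] [BorelSpace G] {μ : Measure G} {S : AddSubgroup G}

theorem measure_image_add_left_of_mem (hμ : ∀ s ∈ S, map (s + ·) μ = μ) {s : G} (hs : s ∈ S)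
    (A : Set G) : μ ((s + ·) '' A) = μ A := by
  rw [image_add_left, ← (measurableEmbedding_addLeft (-s)).map_apply, hμ _ (S.neg_mem hs)]

theorem measure_le_measure_image_add_left_of_dense [μ.OuterRegular] (hS : Dense (S : Set G))
    (hμ : ∀ s ∈ S, map (s + ·) μ = μ) (y : G) {K : Set G} (hK : IsCompact K) :
    μ K ≤ μ ((y + ·) '' K) := by
  rw [Set.measure_eq_iInf_isOpen ((y + ·) '' K) μ]
  refine le_iInf fun U => le_iInf fun hKU => le_iInf fun hU => ?_
  obtain ⟨V, hV, hVU⟩ :=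
    compact_open_separated_add_left (hK.image (continuous_const_add y)) hU hKU
  -- approximate `y` by `s ∈ S` with `s - y ∈ V`; then `s + K = (s - y) + (y + K) ⊆ U`
  have hVy : (· + y) '' V ∈ 𝓝 y := by
    simpa using (Homeomorph.addRight y).isOpenMap.image_mem_nhds hV
  obtain ⟨_, ⟨v, hv, rfl⟩, hs⟩ := mem_closure_iff_nhds.1 (hS y) _ hVy
  have hsub : ((v + y) + ·) '' K ⊆ U := by
    rintro _ ⟨k, hk, rfl⟩
    simpa only [add_assoc] using hVU (add_mem_add hv (mem_image_of_mem _ hk))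
  calc μ K = μ (((v + y) + ·) '' K) := (measure_image_add_left_of_mem hμ hs K).symm
    _ ≤ μ U := measure_mono hsub

theorem measure_image_add_left_of_dense [μ.OuterRegular] (hS : Dense (S : Set G))
    (hμ : ∀ s ∈ S, map (s + ·) μ = μ) (y : G) {K : Set G} (hK : IsCompact K) :
    μ ((y + ·) '' K) = μ K := by
  refine le_antisymm ?_ (measure_le_measure_image_add_left_of_dense hS hμ y hK)
  have h := measure_le_measure_image_add_left_of_dense hS hμ (-y)
    (hK.image (continuous_const_add y))
  simpa only [image_image, neg_add_cancel_left, image_id'] using h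

theorem map_add_left_eq_self_of_dense [μ.Regular] (hS : Dense (S : Set G))
    (hμ : ∀ s ∈ S, map (s + ·) μ = μ) (y : G) : map (y + ·) μ = μ := by
  have : (map (y + ·) μ).Regular := Regular.map (Homeomorph.addLeft y)
  refine Regular.ext_of_isCompact fun K hK => ?_
  rw [(measurableEmbedding_addLeft y).map_apply, ← image_add_left',
    measure_image_add_left_of_dense hS hμ (-y) hK]

end DenseSubgroup

end MeasureTheory.Measure

theorem stmt_15_general {H H' : Type*}
    [AddCommGroup H] [TopologicalSpace H] [IsTopologicalAddGroup H]
    [MeasurableSpace H] [BorelSpace H]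
    [AddCommGroup H'] [TopologicalSpace H'] [IsTopologicalAddGroup H']
    [MeasurableSpace H'] [BorelSpace H']
    (φ : H →+ H') (hφc : Continuous φ) (hφd : DenseRange φ)
    (mH : Measure H) [mH.IsAddHaarMeasure]
    (ν : Measure H') (hν : ν = Measure.map φ mH) (hreg : ν.Regular) :
    ∀ y : H', Measure.map (fun x => y + x) ν = ν := by
  subst hν
  refine Measure.map_add_left_eq_self_of_dense (S := φ.range) (by rwa [AddMonoidHom.coe_range]) ?_
  rintro _ ⟨h, rfl⟩
  exact Measure.map_add_left_map_eq_self mH φ hφc.measurable h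

theorem stmt_15 {H H' : Type*}
    [AddCommGroup H] [TopologicalSpace H] [IsTopologicalAddGroup H] [LocallyCompactSpace H]
    [MeasurableSpace H] [BorelSpace H]
    [AddCommGroup H'] [TopologicalSpace H'] [IsTopologicalAddGroup H'] [LocallyCompactSpace H']
    [MeasurableSpace H'] [BorelSpace H']
    (φ : H →+ H') (hφc : Continuous φ) (hφd : DenseRange φ)
    (mH : Measure H) [mH.IsAddHaarMeasure]
    (ν : Measure H') (hν : ν = Measure.map φ mH) (hreg : ν.Regular) :
    ∀ y : H', Measure.map (fun x => y + x) ν = ν :=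
  stmt_15_general φ hφc hφd mH ν hν hreg
end
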